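/- Let α be irrational with convergents p_n/q_n, z_n = q_nα − p_n, and b_n = (|z_n| + |z_{n+1}|)/2. Let T : ℝ/ℤ → ℝ/ℤ be the translation Tx = x + α, and let I ⊂ ℝ/ℤ be the arc [−b_n, b_n) (mod 1). Then for every x ∈ ℝ/ℤ there exists an integer j with 0 ≤ j < q_{n+1} such that T^j x ∈ I; i.e., min{j ∈ ℕ : T^j x ∈ I} < q_{n+1}. -/

import Mathlib

/-!
Positivity of the partial quotients gives `q_n ≤ q_{n+1}`, and the Gauss-map recursion gives
`z_{n+1} = -x_{n+1} z_n`, so `z_n` and `z_{n+1}` have opposite signs. Among the orbit points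
`s + jα`, `j < q_{n+1}`, take the one with the smallest fractional part. Shifting its index by
`±q_n` or by `∓(q_{n+1} - q_n)` (the signs chosen by the sign of `z_n`; one of the two shifts stays
in range) moves it to the left by `|z_n|` or by `|z_n| + |z_{n+1}|`, so by minimality its
fractional part is below `|z_n| + |z_{n+1}|`. Taking `s = x + b_n` turns this into a visit to
`[-b_n, b_n)`.
-/
/-- Gauss map iterates of `α`: `x₀ = {α}`, `x_{n+1} = {1/x_n}`. -/
noncomputable def gaussIter (α : ℝ) : ℕ → ℝ
  | 0 => Int.fract α
  | n + 1 => Int.fract (gaussIter α n)⁻¹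

/-- `cfa α n` is the partial quotient `a_{n+1} = ⌊1/x_n⌋` of the continued fraction of `α`. -/
noncomputable def cfa (α : ℝ) (n : ℕ) : ℕ := ⌊(gaussIter α n)⁻¹⌋₊

/-- Denominators `q_n` of the continued fraction convergents of `α`:
`q₀ = 1`, `q₁ = a₁`, `q_{n+2} = a_{n+2} q_{n+1} + q_n`. -/
noncomputable def cfq (α : ℝ) : ℕ → ℕ
  | 0 => 1
  | 1 => cfa α 0
  | n + 2 => cfa α (n + 1) * cfq α (n + 1) + cfq α n

/-- Numerators `p_n` of the continued fraction convergents of `α`: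
`p₀ = ⌊α⌋`, `p₁ = a₁⌊α⌋ + 1`, `p_{n+2} = a_{n+2} p_{n+1} + p_n`. -/
noncomputable def cfp (α : ℝ) : ℕ → ℤ
  | 0 => ⌊α⌋
  | 1 => cfa α 0 * ⌊α⌋ + 1
  | n + 2 => cfa α (n + 1) * cfp α (n + 1) + cfp α n

/-- `z_n = q_n α - p_n`. -/
noncomputable def cfz (α : ℝ) (n : ℕ) : ℝ := (cfq α n : ℝ) * α - (cfp α n : ℝ)

/-- The arc `[c, d) (mod 1)` on the circle `ℝ/ℤ`. -/
noncomputable def arc (c d : ℝ) : Set (AddCircle (1 : ℝ)) :=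
  (fun t : ℝ => (t : AddCircle (1 : ℝ))) '' Set.Ico c d

open Int

lemma Irrational.fract {y : ℝ} (hy : Irrational y) : Irrational (Int.fract y) :=
  hy.sub_intCast ⌊y⌋

lemma Irrational.fract_pos {y : ℝ} (hy : Irrational y) : 0 < Int.fract y :=
  Int.fract_pos.2 (hy.ne_int ⌊y⌋)

lemma fract_lt_of_le_fract_sub_add {w r : ℝ} {k : ℤ} (hr : 0 < r)
    (h : fract w ≤ fract (w - r + k)) : fract w < r := by
  by_contra! hrw
  have hshift : fract (w - r + k) = fract w - r := by
    rw [fract_add_intCast, fract_eq_iff]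
    exact ⟨by linarith, by linarith [fract_lt_one w], ⌊w⌋, by rw [← self_sub_fract w]; ring⟩
  linarith

theorem exists_fract_add_mul_lt {α s : ℝ} {q Q : ℕ} {P P' : ℤ} (hQ : 0 < Q) (hqQ : q ≤ Q)
    (hsign : (q * α - P) * (Q * α - P') < 0) :
    ∃ j < Q, fract (s + j * α) < |q * α - P| + |Q * α - P'| := by
  obtain ⟨j₀, hj₀, hmin⟩ := Finset.exists_min_image (Finset.range Q)
    (fun j : ℕ => fract (s + j * α)) ⟨0, Finset.mem_range.2 hQ⟩
  rw [Finset.mem_range] at hj₀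
  refine ⟨j₀, hj₀, ?_⟩
  have shift : ∀ j < Q, ∀ r > 0, ∀ k : ℤ, (j : ℝ) * α = j₀ * α - r + k →
      fract (s + j₀ * α) < r := fun j hj r hr k hjα =>
    fract_lt_of_le_fract_sub_add hr <| by
      rw [add_sub_assoc, add_assoc, ← hjα]
      exact hmin j (Finset.mem_range.2 hj)
  rcases mul_neg_iff.1 hsign with ⟨hu, hv⟩ | ⟨hu, hv⟩
  · rw [abs_of_pos hu, abs_of_neg hv]
    by_cases hj : q ≤ j₀
    · refine (shift (j₀ - q) (by omega) _ hu (-P) ?_).trans (by linarith)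
      push_cast [hj]
      ring
    · refine shift (j₀ + (Q - q)) (by omega) _ (by linarith) (P' - P) ?_
      push_cast [hqQ]
      ring
  · rw [abs_of_neg hu, abs_of_pos hv]
    by_cases hj : j₀ + q < Q
    · refine (shift (j₀ + q) hj (-(q * α - P)) (by linarith) P ?_).trans (by linarith)
      push_cast
      ring
    · refine shift (j₀ - (Q - q)) (by omega) _ (by linarith) (P - P') ?_
      push_cast [hqQ, show Q - q ≤ j₀ by omega]
      ring

lemma mem_arc_of_fract_add_lt {w c : ℝ} (h : fract (w + c / 2) < c) :
    (w : AddCircle (1 : ℝ)) ∈ arc (-(c / 2)) (c / 2) := by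
  refine ⟨fract (w + c / 2) - c / 2, ⟨by linarith [fract_nonneg (w + c / 2)], by linarith⟩, ?_⟩
  rw [fract, show w + c / 2 - ⌊w + c / 2⌋ - c / 2 = w - ⌊w + c / 2⌋ by ring]
  simp

lemma gaussIter_irrational {α : ℝ} (hα : Irrational α) (n : ℕ) : Irrational (gaussIter α n) := by
  induction n with
  | zero => exact hα.fract
  | succ n ih => exact ih.inv.fract

lemma gaussIter_pos {α : ℝ} (hα : Irrational α) (n : ℕ) : 0 < gaussIter α n := by
  cases n with
  | zero => exact hα.fract_pos
  | succ n => exact (gaussIter_irrational hα n).inv.fract_pos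

lemma gaussIter_nonneg (α : ℝ) (n : ℕ) : 0 ≤ gaussIter α n := by
  cases n <;> exact fract_nonneg _

lemma gaussIter_lt_one (α : ℝ) (n : ℕ) : gaussIter α n < 1 := by
  cases n <;> exact fract_lt_one _

lemma one_le_cfa {α : ℝ} (hα : Irrational α) (n : ℕ) : 1 ≤ cfa α n :=
  Nat.le_floor <| by
    rw [Nat.cast_one]
    exact one_le_inv₀ (gaussIter_pos hα n) |>.2 (gaussIter_lt_one α n).le

lemma cfa_eq_inv_sub (α : ℝ) (n : ℕ) :
    (cfa α n : ℝ) = (gaussIter α n)⁻¹ - gaussIter α (n + 1) := by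
  rw [cfa, natCast_floor_eq_intCast_floor (inv_nonneg.2 (gaussIter_nonneg α n)), gaussIter,
    fract]
  ring

lemma cfq_pos {α : ℝ} (hα : Irrational α) (n : ℕ) : 0 < cfq α n := by
  induction n using Nat.twoStepInduction with
  | zero => exact Nat.one_pos
  | one => exact one_le_cfa hα 0
  | more n _ ih => exact Nat.add_pos_left (Nat.mul_pos (one_le_cfa hα (n + 1)) ih) _

lemma cfq_le_cfq_succ {α : ℝ} (hα : Irrational α) (n : ℕ) : cfq α n ≤ cfq α (n + 1) := by
  cases n with
  | zero => exact one_le_cfa hα 0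
  | succ n => exact Nat.le_add_right_of_le (Nat.le_mul_of_pos_left _ (one_le_cfa hα (n + 1)))

lemma cfz_zero (α : ℝ) : cfz α 0 = gaussIter α 0 := by
  simp only [cfz, cfq, cfp, gaussIter, fract]
  push_cast
  ring

lemma cfz_one (α : ℝ) : cfz α 1 = cfa α 0 * gaussIter α 0 - 1 := by
  simp only [cfz, cfq, cfp, gaussIter, fract]
  push_cast
  ring

lemma cfz_add_two (α : ℝ) (n : ℕ) :
    cfz α (n + 2) = cfa α (n + 1) * cfz α (n + 1) + cfz α n := by
  simp only [cfz, cfq, cfp]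
  push_cast
  ring

lemma cfz_succ {α : ℝ} (hα : Irrational α) (n : ℕ) :
    cfz α (n + 1) = -gaussIter α (n + 1) * cfz α n := by
  induction n with
  | zero =>
    have hx := (gaussIter_pos hα 0).ne'
    rw [cfz_one, cfz_zero, cfa_eq_inv_sub]
    field_simp
    ring
  | succ n ih =>
    have hx := (gaussIter_pos hα (n + 1)).ne'
    rw [cfz_add_two, ih, cfa_eq_inv_sub]
    field_simp
    ring

lemma cfz_ne_zero {α : ℝ} (hα : Irrational α) (n : ℕ) : cfz α n ≠ 0 :=
  ((hα.natCast_mul (cfq_pos hα n).ne').sub_intCast _).ne_zero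

lemma cfz_mul_cfz_succ_neg {α : ℝ} (hα : Irrational α) (n : ℕ) :
    cfz α n * cfz α (n + 1) < 0 := by
  have hx := gaussIter_pos hα (n + 1)
  have hz := mul_self_pos.2 (cfz_ne_zero hα n)
  rw [cfz_succ hα]
  nlinarith

/-- Any orbit of the rotation by `α` enters the arc `I = [-b_n, b_n)` (where
`b_n = (|z_n| + |z_{n+1}|)/2`) in time less than `q_{n+1}`. -/
theorem statement11 (α : ℝ) (hα : Irrational α) (n : ℕ) (x : AddCircle (1 : ℝ)) :
    ∃ j : ℕ, j < cfq α (n + 1) ∧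
      x + (((j : ℝ) * α : ℝ) : AddCircle (1 : ℝ)) ∈
        arc (-((|cfz α n| + |cfz α (n + 1)|) / 2)) ((|cfz α n| + |cfz α (n + 1)|) / 2) := by
  obtain ⟨t, rfl⟩ := QuotientAddGroup.mk_surjective x
  set c := |cfz α n| + |cfz α (n + 1)|
  obtain ⟨j, hj, hfract⟩ := exists_fract_add_mul_lt (s := t + c / 2) (P := cfp α n)
    (P' := cfp α (n + 1)) (cfq_pos hα (n + 1)) (cfq_le_cfq_succ hα n) (cfz_mul_cfz_succ_neg hα n)
  refine ⟨j, hj, ?_⟩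
  rw [← AddCircle.coe_add]
  exact mem_arc_of_fract_add_lt (by rwa [add_right_comm])
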